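/- Let W be an N×N gossip matrix (row-stochastic, nonnegative entries, positive diagonal, strongly connected). Then the limit of the matrix powers lim_{k→∞} W^k exists, i.e., there is an N×N matrix W^∞ such that W^k converges to W^∞ entrywise as k → ∞. -/

import Mathlib

/-!
The columns of `W ^ k` are the iterates `x ↦ W *ᵥ x` started at the basis vectors. Since `W` is
row-stochastic, every entry of `W *ᵥ x` is an average of the entries of `x`, so the spread
`max x - min x` never increases along the iteration. Strong connectivity and the positive
diagonal make some power `W ^ p` entrywise at least some `ε > 0`, and then each entry of
`W ^ p *ᵥ x` stays at distance at least `ε · spread x` from `max x` and from `min x`: the spread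
contracts by the factor `1 - ε` every `p` steps, hence tends to zero. As all later iterates lie in
the interval `[min x, max x]` of an earlier one, the iterates form a Cauchy sequence.
-/

open Filter Topology

/-- An `N × N` real matrix is row-stochastic if all its entries are nonnegative and
every row sums to one. -/
def RowStochastic {N : ℕ} (W : Matrix (Fin N) (Fin N) ℝ) : Prop :=
  (∀ i j, 0 ≤ W i j) ∧ ∀ i, ∑ j, W i j = 1

/-- The directed graph of `W` has an edge from node `m` to node `n` iff `W n m > 0`.
`W` is strongly connected if every node can reach every other node through directed edges. -/
def StronglyConnected {N : ℕ} (W : Matrix (Fin N) (Fin N) ℝ) : Prop :=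
  ∀ m n : Fin N, Relation.ReflTransGen (fun a b => 0 < W b a) m n

/-- A gossip matrix: row-stochastic, strongly connected, with positive diagonal entries. -/
def IsGossipMatrix {N : ℕ} (W : Matrix (Fin N) (Fin N) ℝ) : Prop :=
  RowStochastic W ∧ StronglyConnected W ∧ ∀ i, 0 < W i i

open Finset

namespace Matrix

lemma mul_apply_pos {m n o : Type*} [Fintype n] {A : Matrix m n ℝ} {B : Matrix n o ℝ}
    (hA : ∀ i k, 0 ≤ A i k) (hB : ∀ k j, 0 ≤ B k j) {i : m} {l : n} {j : o}
    (hil : 0 < A i l) (hlj : 0 < B l j) : 0 < (A * B) i j :=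
  sum_pos' (fun k _ => mul_nonneg (hA i k) (hB k j)) ⟨l, mem_univ l, mul_pos hil hlj⟩

variable {ι : Type*} [Fintype ι]

noncomputable def spread [Nonempty ι] (x : ι → ℝ) : ℝ :=
  univ.sup' univ_nonempty x - univ.inf' univ_nonempty x

lemma spread_nonneg [Nonempty ι] (x : ι → ℝ) : 0 ≤ spread x :=
  sub_nonneg.2 <| (inf'_le x (mem_univ (Classical.arbitrary ι))).trans (le_sup' x (mem_univ _))

variable [DecidableEq ι]

section Positivity

variable {P : Matrix ι ι ℝ} (hP : ∀ i j, 0 ≤ P i j)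
include hP

lemma exists_pow_apply_pos_of_reflTransGen {i j : ι}
    (hij : Relation.ReflTransGen (fun a b => 0 < P a b) i j) : ∃ k, 0 < (P ^ k) i j := by
  induction hij with
  | refl => exact ⟨0, by simp⟩
  | tail _ hbc ih =>
    obtain ⟨k, hk⟩ := ih
    exact ⟨k + 1, pow_succ P k ▸ mul_apply_pos (pow_apply_nonneg hP k) hP hk hbc⟩

lemma pow_apply_pos_of_le (hdiag : ∀ i, 0 < P i i) {i j : ι} {k l : ℕ}
    (hk : 0 < (P ^ k) i j) (hkl : k ≤ l) : 0 < (P ^ l) i j := by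
  induction hkl with
  | refl => exact hk
  | step _ ih => exact pow_succ P _ ▸ mul_apply_pos (pow_apply_nonneg hP _) hP ih (hdiag j)

lemma isPrimitive_of_reflTransGen (hdiag : ∀ i, 0 < P i i)
    (hconn : ∀ i j, Relation.ReflTransGen (fun a b => 0 < P a b) i j) : IsPrimitive P := by
  choose K hK using fun q : ι × ι => exists_pow_apply_pos_of_reflTransGen hP (hconn q.1 q.2)
  refine ⟨hP, univ.sup K + 1, Nat.succ_pos _, fun i j => ?_⟩
  exact pow_apply_pos_of_le hP hdiag (hK (i, j)) ((le_sup (mem_univ (i, j))).trans (Nat.le_succ _))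

end Positivity

section Averaging

variable {Q : Matrix ι ι ℝ}

lemma sub_mulVec_apply (hQ : Q ∈ rowStochastic ℝ ι) (c : ℝ) (x : ι → ℝ) (i : ι) :
    c - (Q *ᵥ x) i = ∑ l, Q i l * (c - x l) := by
  simp only [mul_sub, sum_sub_distrib, ← sum_mul, sum_row_of_mem_rowStochastic hQ, one_mul,
    mulVec, dotProduct]

lemma mulVec_apply_sub (hQ : Q ∈ rowStochastic ℝ ι) (c : ℝ) (x : ι → ℝ) (i : ι) :
    (Q *ᵥ x) i - c = ∑ l, Q i l * (x l - c) := by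
  rw [← neg_sub, sub_mulVec_apply hQ, ← sum_neg_distrib]
  simp only [← mul_neg, neg_sub]

variable [Nonempty ι]

lemma mulVec_apply_mem_Icc (hQ : Q ∈ rowStochastic ℝ ι) (x : ι → ℝ) (i : ι) :
    (Q *ᵥ x) i ∈ Set.Icc (univ.inf' univ_nonempty x) (univ.sup' univ_nonempty x) := by
  constructor
  · rw [← sub_nonneg, mulVec_apply_sub hQ]
    exact sum_nonneg fun l _ => mul_nonneg (hQ.1 i l) (sub_nonneg.2 (inf'_le x (mem_univ l)))
  · rw [← sub_nonneg, sub_mulVec_apply hQ]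
    exact sum_nonneg fun l _ => mul_nonneg (hQ.1 i l) (sub_nonneg.2 (le_sup' x (mem_univ l)))

lemma mulVec_apply_le_sup'_sub_mul_spread (hQ : Q ∈ rowStochastic ℝ ι) {ε : ℝ}
    (hε : ∀ i j, ε ≤ Q i j) (x : ι → ℝ) (i : ι) :
    (Q *ᵥ x) i ≤ univ.sup' univ_nonempty x - ε * spread x := by
  obtain ⟨l, -, hl⟩ := exists_mem_eq_inf' univ_nonempty x
  have hmin : ε * spread x ≤ Q i l * (univ.sup' univ_nonempty x - x l) := by
    rw [← hl]
    exact mul_le_mul_of_nonneg_right (hε i l) (spread_nonneg x)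
  have hsum := single_le_sum (f := fun l => Q i l * (univ.sup' univ_nonempty x - x l))
    (fun l _ => mul_nonneg (hQ.1 i l) (sub_nonneg.2 (le_sup' x (mem_univ l)))) (mem_univ l)
  rw [← sub_mulVec_apply hQ] at hsum
  linarith

lemma spread_mulVec_le_mul (hQ : Q ∈ rowStochastic ℝ ι) {ε : ℝ} (hε : ∀ i j, ε ≤ Q i j)
    (x : ι → ℝ) : spread (Q *ᵥ x) ≤ (1 - ε) * spread x := by
  have hsup := sup'_le univ_nonempty (Q *ᵥ x) fun i _ =>
    mulVec_apply_le_sup'_sub_mul_spread hQ hε x i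
  have hinf := le_inf' univ_nonempty (Q *ᵥ x) fun i _ => (mulVec_apply_mem_Icc hQ x i).1
  unfold spread at *
  linarith

variable {P : Matrix ι ι ℝ} (hP : P ∈ rowStochastic ℝ ι)
include hP

lemma tendsto_spread_pow_mulVec {p : ℕ} {ε : ℝ} (hε : 0 < ε) (hpε : ∀ i j, ε ≤ (P ^ p) i j)
    (x : ι → ℝ) : Tendsto (fun k => spread (P ^ k *ᵥ x)) atTop (𝓝 0) := by
  set s := fun k => spread (P ^ k *ᵥ x)
  have hanti : Antitone s := antitone_nat_of_succ_le fun k => by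
    simpa [s, pow_succ', ← mulVec_mulVec] using
      spread_mulVec_le_mul hP (fun i j => nonneg_of_mem_rowStochastic hP) (P ^ k *ᵥ x)
  have hlim := tendsto_atTop_ciInf hanti ⟨0, by rintro _ ⟨k, rfl⟩; exact spread_nonneg _⟩
  have hcontract : ∀ k, s (k + p) ≤ (1 - ε) * s k := fun k => by
    simpa only [s, add_comm k p, pow_add, ← mulVec_mulVec] using
      spread_mulVec_le_mul (pow_mem hP p) hpε (P ^ k *ᵥ x)
  have hL : ⨅ k, s k ≤ (1 - ε) * ⨅ k, s k :=
    le_of_tendsto_of_tendsto' ((tendsto_add_atTop_iff_nat p).2 hlim) (hlim.const_mul _) hcontract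
  have hL0 : 0 ≤ ⨅ k, s k := le_ciInf fun k => spread_nonneg _
  rwa [show ⨅ k, s k = 0 by nlinarith] at hlim

lemma cauchySeq_pow_mulVec {x : ι → ℝ}
    (hspread : Tendsto (fun k => spread (P ^ k *ᵥ x)) atTop (𝓝 0)) :
    CauchySeq fun k => P ^ k *ᵥ x := by
  have hIcc : ∀ K n, K ≤ n → ∀ i, (P ^ n *ᵥ x) i ∈
      Set.Icc (univ.inf' univ_nonempty (P ^ K *ᵥ x)) (univ.sup' univ_nonempty (P ^ K *ᵥ x)) := by
    intro K n hKn i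
    obtain ⟨d, rfl⟩ := Nat.exists_eq_add_of_le hKn
    rw [add_comm, pow_add, ← mulVec_mulVec]
    exact mulVec_apply_mem_Icc (pow_mem hP d) _ i
  refine cauchySeq_of_le_tendsto_0 _ (fun n m K hn hm => ?_) hspread
  exact (dist_pi_le_iff (spread_nonneg _)).2 fun i =>
    Real.dist_le_of_mem_Icc (hIcc K n hn i) (hIcc K m hm i)

end Averaging

theorem IsPrimitive.exists_tendsto_pow {P : Matrix ι ι ℝ} (hP : P ∈ rowStochastic ℝ ι)
    (hprim : IsPrimitive P) : ∃ L, Tendsto (fun k => P ^ k) atTop (𝓝 L) := by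
  cases isEmpty_or_nonempty ι
  · exact ⟨0, by simp [Subsingleton.elim _ (0 : Matrix ι ι ℝ)]⟩
  obtain ⟨p, -, hpos⟩ := hprim.exists_pos_pow
  obtain ⟨q, hq⟩ := Finite.exists_min fun q : ι × ι => (P ^ p) q.1 q.2
  have hcol (j : ι) : ∃ y, Tendsto (fun k => P ^ k *ᵥ Pi.single j 1) atTop (𝓝 y) :=
    cauchySeq_tendsto_of_complete <| cauchySeq_pow_mulVec hP <|
      tendsto_spread_pow_mulVec hP (hpos q.1 q.2) (fun i j => hq (i, j)) _
  choose y hy using hcol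
  refine ⟨of fun i j => y j i, tendsto_pi_nhds.2 fun i => tendsto_pi_nhds.2 fun j => ?_⟩
  simpa [mulVec_single_one, Function.comp_def] using ((continuous_apply i).tendsto _).comp (hy j)

end Matrix

/-- for a gossip matrix `W`, the powers `W^k` converge entrywise to some
matrix `W^∞`. -/
theorem gossip_powers_converge {N : ℕ} (W : Matrix (Fin N) (Fin N) ℝ)
    (hW : IsGossipMatrix W) :
    ∃ Winf : Matrix (Fin N) (Fin N) ℝ,
      Tendsto (fun k : ℕ => W ^ k) atTop (𝓝 Winf) := by
  obtain ⟨hstoch, hconn, hdiag⟩ := hW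
  refine Matrix.IsPrimitive.exists_tendsto_pow (Matrix.mem_rowStochastic_iff_sum.2 hstoch) ?_
  exact Matrix.isPrimitive_of_reflTransGen hstoch.1 hdiag fun i j => (hconn j i).swap
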